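/- arXiv:2208.12260 — 4 statements merged into one kernel-verified Lean document; each statement's English description precedes it below -/
import Mathlib

section
/- Let G(V,E) be a graph with vertex degrees z_v, and on each vertex a particle number m_v ∈ {0,1,...,z_v}. Consider sequences of moves where a vertex v 'fires' (m_v decreases by z_v, each neighbor increases by 1) or 'anti-fires' (the inverse), always respecting the constraints 0 ≤ m_w ≤ z_w. If a vertex v fires at times t'−1 and t+1 with t > t', and the net number of firings of v in every subinterval of [t',t] is zero, then every neighbor of v must fire at least once during the time interval [t',t]. -/
open scoped Classical

variable {V : Type*}

/-- A firing move at vertex `v`: `v` has a full charge `z_v = deg v`, all its neighbors are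
below their maximum, and the move empties `v` while adding one particle to each neighbor. -/
def fireStep (G : SimpleGraph V) [DecidableRel G.Adj] [G.LocallyFinite]
    (v : V) (m m' : V → ℕ) : Prop :=
  m v = G.degree v ∧ (∀ w, G.Adj v w → m w < G.degree w) ∧
    m' v = 0 ∧ (∀ w, G.Adj v w → m' w = m w + 1) ∧
    (∀ w, w ≠ v → ¬ G.Adj v w → m' w = m w)

/-- An anti-firing move at vertex `v`: the inverse of a firing. -/
def antifireStep (G : SimpleGraph V) [DecidableRel G.Adj] [G.LocallyFinite]
    (v : V) (m m' : V → ℕ) : Prop :=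
  m v = 0 ∧ (∀ w, G.Adj v w → 1 ≤ m w) ∧
    m' v = G.degree v ∧ (∀ w, G.Adj v w → m' w + 1 = m w) ∧
    (∀ w, w ≠ v → ¬ G.Adj v w → m' w = m w)

/-- The net number of firings `F_v(a,b)` of vertex `v` in the time window `[a,b]`:
number of firings minus number of anti-firings. -/
noncomputable def netFire (G : SimpleGraph V) [DecidableRel G.Adj] [G.LocallyFinite]
    (c : ℕ → V → ℕ) (v : V) (a b : ℕ) : ℤ :=
  (((Finset.Icc a b).filter (fun s => fireStep G v (c s) (c (s + 1)))).card : ℤ) -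
    (((Finset.Icc a b).filter (fun s => antifireStep G v (c s) (c (s + 1)))).card : ℤ)

section Aux

variable (G : SimpleGraph V) [DecidableRel G.Adj] [G.LocallyFinite]

lemma deg_pos_of_adj {v w : V} (h : G.Adj v w) : 0 < G.degree v :=
  (G.degree_pos_iff_exists_adj v).2 ⟨w, h⟩

lemma two_le_degree {u v w : V} (h1 : G.Adj w u) (h2 : G.Adj w v) (hne : u ≠ v) :
    2 ≤ G.degree w := by
  have hsub : ({u, v} : Finset V) ⊆ G.neighborFinset w := by
    intro x hx
    rcases Finset.mem_insert.1 hx with rfl | hx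
    · exact (SimpleGraph.mem_neighborFinset G w x).2 h1
    · rw [Finset.mem_singleton] at hx; subst hx
      exact (SimpleGraph.mem_neighborFinset G w x).2 h2
  calc 2 = ({u, v} : Finset V).card := (Finset.card_pair hne).symm
    _ ≤ (G.neighborFinset w).card := Finset.card_le_card hsub
    _ = G.degree w := G.card_neighborFinset_eq_degree w

lemma fire_fire {u w : V} {m m' : V → ℕ} (hu : fireStep G u m m') (hw : fireStep G w m m')
    (hne : u ≠ w) (hdw : 0 < G.degree w) : False := by
  obtain ⟨hu1, hu2, hu3, hu4, hu5⟩ := hu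
  obtain ⟨hw1, hw2, hw3, hw4, hw5⟩ := hw
  by_cases hadj : G.Adj u w
  · have := hu4 w hadj
    omega
  · have := hu5 w (Ne.symm hne) hadj
    omega

lemma anti_anti {u w : V} {m m' : V → ℕ} (hu : antifireStep G u m m')
    (hw : antifireStep G w m m') (hne : u ≠ w) (hdw : 0 < G.degree w) : False := by
  obtain ⟨hu1, hu2, hu3, hu4, hu5⟩ := hu
  obtain ⟨hw1, hw2, hw3, hw4, hw5⟩ := hw
  by_cases hadj : G.Adj u w
  · have := hu4 w hadj
    omega
  · have := hu5 w (Ne.symm hne) hadj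
    omega

lemma fire_anti {u v w : V} {m m' : V → ℕ} (hu : fireStep G u m m')
    (hw : antifireStep G w m m') (hvw : G.Adj v w) (huv : u ≠ v) : False := by
  have hdw : 0 < G.degree w := deg_pos_of_adj G hvw.symm
  obtain ⟨hu1, hu2, hu3, hu4, hu5⟩ := hu
  obtain ⟨hw1, hw2, hw3, hw4, hw5⟩ := hw
  by_cases hne : u = w
  · subst hne; omega
  · by_cases hadj : G.Adj u w
    · have h1 := hu4 w hadj
      have hdeg1 : G.degree w = 1 := by omega
      have := two_le_degree G hadj.symm hvw.symm huv
      omega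
    · have := hu5 w (Ne.symm hne) hadj
      omega

lemma anti_fire {u v w : V} {m m' : V → ℕ} (hu : antifireStep G u m m')
    (hw : fireStep G w m m') (hvw : G.Adj v w) (huv : u ≠ v) : False := by
  have hdw : 0 < G.degree w := deg_pos_of_adj G hvw.symm
  obtain ⟨hu1, hu2, hu3, hu4, hu5⟩ := hu
  obtain ⟨hw1, hw2, hw3, hw4, hw5⟩ := hw
  by_cases hne : u = w
  · subst hne; omega
  · by_cases hadj : G.Adj u w
    · have h1 := hu4 w hadj
      have hdeg1 : G.degree w = 1 := by omega
      have := two_le_degree G hadj.symm hvw.symm huv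
      omega
    · have := hu5 w (Ne.symm hne) hadj
      omega

lemma not_fire_of_eq {w : V} {m m' : V → ℕ} (h : m' = m) (hdw : 0 < G.degree w) :
    ¬ fireStep G w m m' := by
  rintro ⟨h1, _, h3, _, _⟩
  rw [h] at h3
  omega

lemma not_anti_of_eq {w : V} {m m' : V → ℕ} (h : m' = m) (hdw : 0 < G.degree w) :
    ¬ antifireStep G w m m' := by
  rintro ⟨h1, _, h3, _, _⟩
  rw [h] at h3
  omega

lemma netFire_def (c : ℕ → V → ℕ) (u : V) (a b : ℕ) : netFire G c u a b =
    (((Finset.Icc a b).filter (fun s => fireStep G u (c s) (c (s + 1)))).card : ℤ) -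
      (((Finset.Icc a b).filter (fun s => antifireStep G u (c s) (c (s + 1)))).card : ℤ) := rfl

lemma netFire_empty (c : ℕ → V → ℕ) (u : V) {a b : ℕ} (h : b < a) :
    netFire G c u a b = 0 := by
  rw [netFire_def, Finset.Icc_eq_empty (by omega)]
  simp

lemma netFire_zero_of_frozen (c : ℕ → V → ℕ) (v : V) {a b : ℕ}
    (h : ∀ s, a ≤ s → s ≤ b → ¬ fireStep G v (c s) (c (s + 1)) ∧
        ¬ antifireStep G v (c s) (c (s + 1))) :
    netFire G c v a b = 0 := by
  rw [netFire_def]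
  rw [Finset.filter_eq_empty_iff.2 (fun {s} hs =>
      (h s (Finset.mem_Icc.1 hs).1 (Finset.mem_Icc.1 hs).2).1),
    Finset.filter_eq_empty_iff.2 (fun {s} hs =>
      (h s (Finset.mem_Icc.1 hs).1 (Finset.mem_Icc.1 hs).2).2)]
  simp

lemma netFire_succ (c : ℕ → V → ℕ) (u : V) (a b : ℕ) (h : a ≤ b + 1) :
    netFire G c u a (b + 1) = netFire G c u a b
      + (if fireStep G u (c (b + 1)) (c (b + 1 + 1)) then (1 : ℤ) else 0)
      - (if antifireStep G u (c (b + 1)) (c (b + 1 + 1)) then (1 : ℤ) else 0) := by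
  have hins : Finset.Icc a (b + 1) = insert (b + 1) (Finset.Icc a b) := by
    ext x
    simp only [Finset.mem_Icc, Finset.mem_insert]
    omega
  have hnm : b + 1 ∉ Finset.Icc a b := by simp
  rw [netFire_def, netFire_def, hins, Finset.filter_insert, Finset.filter_insert]
  by_cases h1 : fireStep G u (c (b + 1)) (c (b + 1 + 1)) <;>
    by_cases h2 : antifireStep G u (c (b + 1)) (c (b + 1 + 1)) <;>
      simp [h1, h2, Finset.card_insert_of_notMem
        (fun hx => hnm (Finset.mem_of_mem_filter _ hx))] <;> ring

lemma netFire_split (c : ℕ → V → ℕ) (u : V) {a b d : ℕ} (hab : a ≤ b) (hbd : b ≤ d) :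
    netFire G c u a d = netFire G c u a b + netFire G c u (b + 1) d := by
  have hun : Finset.Icc a d = Finset.Icc a b ∪ Finset.Icc (b + 1) d := by
    ext x
    simp only [Finset.mem_Icc, Finset.mem_union]
    omega
  have hdis : Disjoint (Finset.Icc a b) (Finset.Icc (b + 1) d) := by
    rw [Finset.disjoint_left]
    intro x hx hx'
    simp only [Finset.mem_Icc] at hx hx'
    omega
  rw [netFire_def, netFire_def, netFire_def, hun, Finset.filter_union, Finset.filter_union,
    Finset.card_union_of_disjoint (Finset.disjoint_filter_filter hdis),
    Finset.card_union_of_disjoint (Finset.disjoint_filter_filter hdis)]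
  push_cast
  ring

lemma netFire_le_card (c : ℕ → V → ℕ) (u : V) (a b : ℕ) :
    netFire G c u a b ≤ ((Finset.Icc a b).card : ℤ) := by
  rw [netFire_def]
  have h1 := Finset.card_filter_le (Finset.Icc a b)
    (fun s => fireStep G u (c s) (c (s + 1)))
  have h2 := Int.natCast_nonneg
    (((Finset.Icc a b).filter (fun s => antifireStep G u (c s) (c (s + 1)))).card)
  omega

end Aux

section Aux2

variable (G : SimpleGraph V) [DecidableRel G.Adj] [G.LocallyFinite]

lemma step_delta (c : ℕ → V → ℕ) {s : ℕ}
    (hstep : (∃ u, fireStep G u (c s) (c (s + 1))) ∨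
      (∃ u, antifireStep G u (c s) (c (s + 1))) ∨ c (s + 1) = c s)
    (v : V) (hv1 : ¬ fireStep G v (c s) (c (s + 1)))
    (hv2 : ¬ antifireStep G v (c s) (c (s + 1))) :
    (c (s + 1) v : ℤ) = (c s v : ℤ) + ∑ w ∈ G.neighborFinset v,
      ((if fireStep G w (c s) (c (s + 1)) then (1 : ℤ) else 0) -
        (if antifireStep G w (c s) (c (s + 1)) then (1 : ℤ) else 0)) := by
  have hdeg : ∀ w ∈ G.neighborFinset v, 0 < G.degree w := fun w hw =>
    deg_pos_of_adj G ((G.mem_neighborFinset v w).1 hw).symm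
  rcases hstep with ⟨u, hu⟩ | ⟨u, hu⟩ | h
  · have huv : u ≠ v := fun h => hv1 (h ▸ hu)
    have hanti : ∀ w ∈ G.neighborFinset v, ¬ antifireStep G w (c s) (c (s + 1)) :=
      fun w hw hA => fire_anti G hu hA ((G.mem_neighborFinset v w).1 hw) huv
    by_cases hadj : G.Adj v u
    · have hsum : (∑ w ∈ G.neighborFinset v,
          ((if fireStep G w (c s) (c (s + 1)) then (1 : ℤ) else 0) -
            (if antifireStep G w (c s) (c (s + 1)) then (1 : ℤ) else 0))) = 1 := by
        rw [Finset.sum_eq_single_of_mem u ((G.mem_neighborFinset v u).2 hadj)]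
        · simp [hu, hanti u ((G.mem_neighborFinset v u).2 hadj)]
        · intro w hw hne
          have hnf : ¬ fireStep G w (c s) (c (s + 1)) := fun hF =>
            fire_fire G hu hF (Ne.symm hne) (hdeg w hw)
          simp [hnf, hanti w hw]
      rw [hsum, hu.2.2.2.1 v hadj.symm]
      push_cast
      ring
    · have hsum : (∑ w ∈ G.neighborFinset v,
          ((if fireStep G w (c s) (c (s + 1)) then (1 : ℤ) else 0) -
            (if antifireStep G w (c s) (c (s + 1)) then (1 : ℤ) else 0))) = 0 := by
        apply Finset.sum_eq_zero
        intro w hw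
        have hne : u ≠ w := fun h => hadj (h ▸ (G.mem_neighborFinset v w).1 hw)
        have hnf : ¬ fireStep G w (c s) (c (s + 1)) := fun hF =>
          fire_fire G hu hF hne (hdeg w hw)
        simp [hnf, hanti w hw]
      rw [hsum, hu.2.2.2.2 v (Ne.symm huv) (fun h => hadj h.symm)]
      ring
  · have huv : u ≠ v := fun h => hv2 (h ▸ hu)
    have hfi : ∀ w ∈ G.neighborFinset v, ¬ fireStep G w (c s) (c (s + 1)) :=
      fun w hw hF => anti_fire G hu hF ((G.mem_neighborFinset v w).1 hw) huv
    by_cases hadj : G.Adj v u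
    · have hsum : (∑ w ∈ G.neighborFinset v,
          ((if fireStep G w (c s) (c (s + 1)) then (1 : ℤ) else 0) -
            (if antifireStep G w (c s) (c (s + 1)) then (1 : ℤ) else 0))) = -1 := by
        rw [Finset.sum_eq_single_of_mem u ((G.mem_neighborFinset v u).2 hadj)]
        · simp [hu, hfi u ((G.mem_neighborFinset v u).2 hadj)]
        · intro w hw hne
          have hna : ¬ antifireStep G w (c s) (c (s + 1)) := fun hA =>
            anti_anti G hu hA (Ne.symm hne) (hdeg w hw)
          simp [hna, hfi w hw]
      rw [hsum]
      have := hu.2.2.2.1 v hadj.symm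
      omega
    · have hsum : (∑ w ∈ G.neighborFinset v,
          ((if fireStep G w (c s) (c (s + 1)) then (1 : ℤ) else 0) -
            (if antifireStep G w (c s) (c (s + 1)) then (1 : ℤ) else 0))) = 0 := by
        apply Finset.sum_eq_zero
        intro w hw
        have hne : u ≠ w := fun h => hadj (h ▸ (G.mem_neighborFinset v w).1 hw)
        have hna : ¬ antifireStep G w (c s) (c (s + 1)) := fun hA =>
          anti_anti G hu hA hne (hdeg w hw)
        simp [hna, hfi w hw]
      rw [hsum, hu.2.2.2.2 v (Ne.symm huv) (fun h => hadj h.symm)]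
      ring
  · have hsum : (∑ w ∈ G.neighborFinset v,
        ((if fireStep G w (c s) (c (s + 1)) then (1 : ℤ) else 0) -
          (if antifireStep G w (c s) (c (s + 1)) then (1 : ℤ) else 0))) = 0 := by
      apply Finset.sum_eq_zero
      intro w hw
      simp [not_fire_of_eq G h (hdeg w hw), not_anti_of_eq G h (hdeg w hw)]
    rw [hsum, congrFun h v]
    ring

lemma conserve (c : ℕ → V → ℕ)
    (hstep : ∀ s, (∃ u, fireStep G u (c s) (c (s + 1))) ∨
      (∃ u, antifireStep G u (c s) (c (s + 1))) ∨ c (s + 1) = c s)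
    (v : V) (a : ℕ) :
    ∀ b, a ≤ b → (∀ s, a ≤ s → s ≤ b → ¬ fireStep G v (c s) (c (s + 1)) ∧
        ¬ antifireStep G v (c s) (c (s + 1))) →
      (c (b + 1) v : ℤ) = (c a v : ℤ) + ∑ w ∈ G.neighborFinset v, netFire G c w a b := by
  intro b hb
  induction b, hb using Nat.le_induction with
  | base =>
    intro hfroz
    have h := step_delta G c (hstep a) v (hfroz a le_rfl le_rfl).1 (hfroz a le_rfl le_rfl).2
    rw [h]
    congr 1
    apply Finset.sum_congr rfl
    intro w _
    rw [netFire_def, Finset.Icc_self, Finset.filter_singleton, Finset.filter_singleton]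
    by_cases h1 : fireStep G w (c a) (c (a + 1)) <;>
      by_cases h2 : antifireStep G w (c a) (c (a + 1)) <;> simp [h1, h2]
  | succ b hab IH =>
    intro hfroz
    have h := step_delta G c (hstep (b + 1)) v (hfroz (b + 1) (by omega) le_rfl).1
      (hfroz (b + 1) (by omega) le_rfl).2
    rw [h, IH (fun s h1 h2 => hfroz s h1 (by omega))]
    have : ∑ w ∈ G.neighborFinset v, netFire G c w a (b + 1) =
        ∑ w ∈ G.neighborFinset v, (netFire G c w a b +
          ((if fireStep G w (c (b + 1)) (c (b + 1 + 1)) then (1 : ℤ) else 0) -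
            (if antifireStep G w (c (b + 1)) (c (b + 1 + 1)) then (1 : ℤ) else 0))) := by
      apply Finset.sum_congr rfl
      intro w _
      rw [netFire_succ G c w a b (by omega)]
      ring
    rw [this, Finset.sum_add_distrib]
    ring

end Aux2

section Aux3

variable (G : SimpleGraph V) [DecidableRel G.Adj] [G.LocallyFinite]

lemma star (c : ℕ → V → ℕ)
    (hstep : ∀ s, (∃ u, fireStep G u (c s) (c (s + 1))) ∨
      (∃ u, antifireStep G u (c s) (c (s + 1))) ∨ c (s + 1) = c s) :
    ∀ n a b v w, b ≤ a + n → G.Adj v w →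
      (∀ s, a ≤ s → s ≤ b → ¬ fireStep G v (c s) (c (s + 1)) ∧
        ¬ antifireStep G v (c s) (c (s + 1))) →
      netFire G c w a b ≤ 1 := by
  intro n
  induction n with
  | zero =>
    intro a b v w hb _ _
    have h1 := netFire_le_card G c w a b
    have h2 : (Finset.Icc a b).card = b + 1 - a := Nat.card_Icc a b
    omega
  | succ n IH =>
    intro a b v w hb hadj hfroz
    by_contra hgt
    push_neg at hgt
    have hdw : 0 < G.degree w := deg_pos_of_adj G hadj.symm
    have hP : 2 ≤ netFire G c w a b := by omega
    have hex : ∃ s, 2 ≤ netFire G c w a s := ⟨b, hP⟩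
    set s2 := Nat.find hex with hs2def
    have hs2 : 2 ≤ netFire G c w a s2 := Nat.find_spec hex
    have hs2min : ∀ s, s < s2 → netFire G c w a s ≤ 1 := by
      intro s hs
      have := Nat.find_min hex hs
      omega
    have hs2le : s2 ≤ b := Nat.find_min' hex hP
    obtain ⟨p, hp⟩ : ∃ p, s2 = p + 1 := by
      refine ⟨s2 - 1, ?_⟩
      have hne : s2 ≠ 0 := by
        intro h0
        rw [h0] at hs2
        have h1 := netFire_le_card G c w a 0
        have h2 : (Finset.Icc a 0).card = 0 + 1 - a := Nat.card_Icc a 0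
        omega
      omega
    have hale : a ≤ p + 1 := by
      by_contra hlt
      push_neg at hlt
      have := netFire_empty G c w (a := a) (b := p + 1) (by omega)
      rw [hp, this] at hs2
      omega
    rw [hp] at hs2
    rw [netFire_succ G c w a p hale] at hs2
    have hple : netFire G c w a p ≤ 1 := hs2min p (by omega)
    have hF : fireStep G w (c (p + 1)) (c (p + 1 + 1)) := by
      by_contra hnF
      simp only [hnF, if_false] at hs2
      split_ifs at hs2 <;> omega
    have hnfp : netFire G c w a p = 1 := by
      simp only [hF, if_true] at hs2
      split_ifs at hs2 <;> omega
    -- there is a fire of w in [a, p]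
    have hne : ((Finset.Icc a p).filter
        (fun s => fireStep G w (c s) (c (s + 1)))).Nonempty := by
      rw [← Finset.card_pos]
      by_contra hcard
      push_neg at hcard
      rw [netFire_def] at hnfp
      have h2 := Int.natCast_nonneg
        (((Finset.Icc a p).filter (fun s => antifireStep G w (c s) (c (s + 1)))).card)
      omega
    set s1 := ((Finset.Icc a p).filter
        (fun s => fireStep G w (c s) (c (s + 1)))).max' hne with hs1def
    have hs1mem := Finset.max'_mem _ hne
    rw [← hs1def] at hs1mem
    have hs1Icc := Finset.mem_Icc.1 (Finset.mem_filter.1 hs1mem).1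
    have hs1f : fireStep G w (c s1) (c (s1 + 1)) := (Finset.mem_filter.1 hs1mem).2
    have hs1max : ∀ x ∈ (Finset.Icc a p).filter
        (fun s => fireStep G w (c s) (c (s + 1))), x ≤ s1 := fun x hx =>
      Finset.le_max' _ x hx
    have hnofire : ∀ s, s1 + 1 ≤ s → s ≤ p → ¬ fireStep G w (c s) (c (s + 1)) := by
      intro s h1 h2 hFs
      have hmem : s ∈ (Finset.Icc a p).filter
          (fun s => fireStep G w (c s) (c (s + 1))) :=
        Finset.mem_filter.2 ⟨Finset.mem_Icc.2 ⟨by omega, h2⟩, hFs⟩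
      have := hs1max s hmem
      omega
    have hsplit := netFire_split G c w (a := a) (b := s1) (d := p) hs1Icc.1 hs1Icc.2
    have h1le : netFire G c w a s1 ≤ 1 := hs2min s1 (by omega)
    have hQf : (Finset.Icc (s1 + 1) p).filter
        (fun s => fireStep G w (c s) (c (s + 1))) = ∅ :=
      Finset.filter_eq_empty_iff.2 (fun {s} hs =>
        hnofire s (Finset.mem_Icc.1 hs).1 (Finset.mem_Icc.1 hs).2)
    have hQ : netFire G c w (s1 + 1) p =
        -(((Finset.Icc (s1 + 1) p).filter
          (fun s => antifireStep G w (c s) (c (s + 1)))).card : ℤ) := by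
      rw [netFire_def, hQf]
      simp
    have hQ0 : ((Finset.Icc (s1 + 1) p).filter
        (fun s => antifireStep G w (c s) (c (s + 1)))).card = 0 := by
      have h2 := Int.natCast_nonneg
        (((Finset.Icc (s1 + 1) p).filter (fun s => antifireStep G w (c s) (c (s + 1)))).card)
      omega
    have hnoanti : ∀ s, s1 + 1 ≤ s → s ≤ p → ¬ antifireStep G w (c s) (c (s + 1)) := by
      intro s h1 h2 hAs
      have hmem : s ∈ (Finset.Icc (s1 + 1) p).filter
          (fun s => antifireStep G w (c s) (c (s + 1))) :=
        Finset.mem_filter.2 ⟨Finset.mem_Icc.2 ⟨h1, h2⟩, hAs⟩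
      rw [Finset.card_eq_zero.1 hQ0] at hmem
      exact absurd hmem (Finset.notMem_empty s)
    -- c (s1+1) w = 0 and c (p+1) w = degree w
    have hzero : c (s1 + 1) w = 0 := hs1f.2.2.1
    have hfull : c (p + 1) w = G.degree w := hF.1
    by_cases hcase : s1 = p
    · rw [hcase] at hzero
      omega
    · have hs1p : s1 + 1 ≤ p := by omega
      have hfrozw : ∀ s, s1 + 1 ≤ s → s ≤ p → ¬ fireStep G w (c s) (c (s + 1)) ∧
          ¬ antifireStep G w (c s) (c (s + 1)) :=
        fun s h1 h2 => ⟨hnofire s h1 h2, hnoanti s h1 h2⟩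
      have hcons := conserve G c hstep w (s1 + 1) p hs1p hfrozw
      rw [hzero, hfull] at hcons
      -- sum over neighbors of w equals degree w
      have hvmem : v ∈ G.neighborFinset w := (G.mem_neighborFinset w v).2 hadj.symm
      have hvzero : netFire G c v (s1 + 1) p = 0 := by
        apply netFire_zero_of_frozen
        intro s h1 h2
        exact hfroz s (by omega) (by omega)
      have hsum := Finset.sum_erase_add (G.neighborFinset w)
        (fun x => netFire G c x (s1 + 1) p) hvmem
      have hbnd : ∑ x ∈ (G.neighborFinset w).erase v, netFire G c x (s1 + 1) p ≤
          (((G.neighborFinset w).erase v).card : ℤ) := by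
        have := Finset.sum_le_card_nsmul ((G.neighborFinset w).erase v)
          (fun x => netFire G c x (s1 + 1) p) 1 (fun x hx => by
            have hxw : G.Adj w x := (G.mem_neighborFinset w x).1 (Finset.mem_of_mem_erase hx)
            exact IH (s1 + 1) p w x (by omega) hxw hfrozw)
        simpa using this
      have hcarde : ((G.neighborFinset w).erase v).card = G.degree w - 1 := by
        rw [Finset.card_erase_of_mem hvmem, G.card_neighborFinset_eq_degree w]
      rw [hcarde] at hbnd
      simp only [hvzero] at hsum
      omega

end Aux3

/-- If `v` fires at times `t'-1` and `t+1` with `t > t'`, and the net number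
of firings of `v` vanishes on every subinterval of `[t',t]`, then every neighbor of `v` fires
at least once during `[t',t]`. -/
theorem neighbors_fire_between (G : SimpleGraph V) [DecidableRel G.Adj] [G.LocallyFinite]
    (z0 : ℕ) (hz0 : ∀ w, G.degree w ≤ z0)
    (c : ℕ → V → ℕ)
    (hbound : ∀ s w, c s w ≤ G.degree w)
    (hstep : ∀ s, (∃ w, fireStep G w (c s) (c (s + 1))) ∨
      (∃ w, antifireStep G w (c s) (c (s + 1))) ∨ c (s + 1) = c s)
    (v : V) (t' t : ℕ) (ht'pos : 1 ≤ t') (ht : t' < t)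
    (hfire1 : fireStep G v (c (t' - 1)) (c t'))
    (hfire2 : fireStep G v (c (t + 1)) (c (t + 2)))
    (hnet : ∀ a b, t' ≤ a → a ≤ b → b ≤ t → netFire G c v a b = 0) :
    ∀ w, G.Adj v w → ∃ s, t' ≤ s ∧ s ≤ t ∧ fireStep G w (c s) (c (s + 1)) := by
  intro w hadjvw
  have hdegv : 0 < G.degree v := deg_pos_of_adj G hadjvw
  have hfroz : ∀ s, t' ≤ s → s ≤ t → ¬ fireStep G v (c s) (c (s + 1)) ∧
      ¬ antifireStep G v (c s) (c (s + 1)) := by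
    intro s h1 h2
    have h0 := hnet s s h1 le_rfl h2
    rw [netFire_def, Finset.Icc_self, Finset.filter_singleton, Finset.filter_singleton] at h0
    by_cases hF : fireStep G v (c s) (c (s + 1)) <;>
      by_cases hA : antifireStep G v (c s) (c (s + 1))
    · exact absurd hA.1 (by rw [hF.1]; omega)
    · simp [hF, hA] at h0
    · simp [hF, hA] at h0
    · exact ⟨hF, hA⟩
  have hcons := conserve G c hstep v t' t (le_of_lt ht) hfroz
  rw [hfire1.2.2.1, hfire2.1] at hcons
  have hle : ∀ x ∈ G.neighborFinset v, netFire G c x t' t ≤ 1 := by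
    intro x hx
    exact star G c hstep t t' t v x (by omega) ((G.mem_neighborFinset v x).1 hx) hfroz
  have hall : ∀ x ∈ G.neighborFinset v, netFire G c x t' t = 1 := by
    intro x hx
    by_contra hne
    have hx0 : netFire G c x t' t ≤ 0 := by
      have := hle x hx
      omega
    have hsum := Finset.sum_erase_add (G.neighborFinset v)
      (fun y => netFire G c y t' t) hx
    have hbnd : ∑ y ∈ (G.neighborFinset v).erase x, netFire G c y t' t ≤
        (((G.neighborFinset v).erase x).card : ℤ) := by
      have := Finset.sum_le_card_nsmul ((G.neighborFinset v).erase x)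
        (fun y => netFire G c y t' t) 1
        (fun y hy => hle y (Finset.mem_of_mem_erase hy))
      simpa using this
    have hcarde : ((G.neighborFinset v).erase x).card = G.degree v - 1 := by
      rw [Finset.card_erase_of_mem hx, G.card_neighborFinset_eq_degree v]
    rw [hcarde] at hbnd
    omega
  have h1 := hall w ((G.mem_neighborFinset v w).2 hadjvw)
  rw [netFire_def] at h1
  have hpos : 0 < ((Finset.Icc t' t).filter
      (fun s => fireStep G w (c s) (c (s + 1)))).card := by
    have h2 := Int.natCast_nonneg
      (((Finset.Icc t' t).filter (fun s => antifireStep G w (c s) (c (s + 1)))).card)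
    omega
  obtain ⟨s, hs⟩ := Finset.card_pos.1 hpos
  have hs' := Finset.mem_filter.1 hs
  have hsIcc := Finset.mem_Icc.1 hs'.1
  exact ⟨s, hsIcc.1, hsIcc.2, hs'.2⟩
end

section
/- Let G(V,E) be a graph with degrees z_v and particle numbers m_v ∈ {0,...,z_v} evolving under firing/anti-firing moves (a fire at v moves one particle to each neighbor, an anti-fire takes one from each neighbor, subject to 0 ≤ m_w ≤ z_w). Let R ⊆ V be a set of vertices such that every v ∈ R has at least one neighbor also in R, and let R̄ = R ∪ (union of neighborhoods of vertices of R). If the initial configuration has m_w = 0 for all w ∈ R̄, then for every configuration reachable by any sequence of allowed moves, m_v = 0 for all v ∈ R. -/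
variable {V : Type*}

/-- A single allowed move of the dynamics, applied anywhere in the graph. -/
def moveStep (G : SimpleGraph V) [DecidableRel G.Adj] [G.LocallyFinite]
    (m m' : V → ℕ) : Prop :=
  ∃ v, fireStep G v m m' ∨ antifireStep G v m m'

/-! Until some vertex of `R̄` moves, `R` stays empty, since neither its vertices nor their
neighbors move. Consider the first move at a vertex `w ∈ R̄`; `w` has a neighbor `u ∈ R`, still
empty. An anti-firing at `w` would need `u` nonempty. A firing needs `w` full; `w` started empty
and has not moved, so it was filled by its neighbors, and since `u` stayed idle some other
neighbor `z` fired twice in a row. Between these two firings `z` went from empty to full while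
it and its neighbor `w` stayed idle: the same situation on a strictly shorter time interval,
which yields an infinite descent. -/

open Finset

theorem exists_consecutive_eq_one {d : ℕ → ℤ} {lo hi : ℕ}
    (hd : ∀ i ∈ Ico lo hi, |d i| ≤ 1) (h : 2 ≤ ∑ i ∈ Ico lo hi, d i) :
    ∃ a b, lo ≤ a ∧ a < b ∧ b < hi ∧ d a = 1 ∧ d b = 1 ∧
      ∀ i ∈ Ioo a b, d i = 0 := by
  have hlo : lo ≤ hi := by
    by_contra! h'
    simp [Ico_eq_empty_of_le h'.le] at h
  -- A sum equal to `1` may end with a `1` followed by `0`s, which the induction must track.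
  suffices key : 1 ≤ ∑ i ∈ Ico lo hi, d i →
      (∃ a b, lo ≤ a ∧ a < b ∧ b < hi ∧ d a = 1 ∧ d b = 1 ∧
        ∀ i ∈ Ioo a b, d i = 0) ∨
      (∑ i ∈ Ico lo hi, d i = 1 ∧
        ∃ a, lo ≤ a ∧ a < hi ∧ d a = 1 ∧ ∀ i ∈ Ioo a hi, d i = 0) by
    exact (key (by omega)).resolve_right (by omega)
  clear h
  induction hi, hlo using Nat.le_induction with
  | base => simp
  | succ hi hlo ih =>
    intro hS
    rw [sum_Ico_succ_top hlo] at hS ⊢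
    have hd' : ∀ i ∈ Ico lo hi, |d i| ≤ 1 := fun i hi' =>
      hd i (Ico_subset_Ico_right hi.le_succ hi')
    have hdhi := abs_le.mp (hd hi (by simp [hlo]))
    obtain hone | hzero | hneg : d hi = 1 ∨ d hi = 0 ∨ d hi = -1 := by omega
    · by_cases hS' : 1 ≤ ∑ i ∈ Ico lo hi, d i
      · rcases ih hd' hS' with ⟨a, b, hla, hab, hbhi, hpair⟩ | ⟨-, a, ha, hahi, hda, hgap⟩
        · exact .inl ⟨a, b, hla, hab, by omega, hpair⟩
        · exact .inl ⟨a, hi, ha, hahi, by omega, hda, hone, hgap⟩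
      · refine .inr ⟨by omega, hi, hlo, by omega, hone, fun i hi' => ?_⟩
        simp at hi'
        omega
    · rcases ih hd' (by omega) with
        ⟨a, b, hla, hab, hbhi, hpair⟩ | ⟨hsum, a, ha, hahi, hda, hgap⟩
      · exact .inl ⟨a, b, hla, hab, by omega, hpair⟩
      · refine .inr ⟨by omega, a, ha, by omega, hda, fun i hi' => ?_⟩
        obtain ⟨hai, hih⟩ := mem_Ioo.mp hi'
        rcases Nat.lt_succ_iff_lt_or_eq.mp hih with hlt | rfl
        · exact hgap i (mem_Ioo.mpr ⟨hai, hlt⟩)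
        · exact hzero
    · rcases ih hd' (by omega) with ⟨a, b, hla, hab, hbhi, hpair⟩ | ⟨hsum, -⟩
      · exact .inl ⟨a, b, hla, hab, by omega, hpair⟩
      · omega

structure MoveSeq (G : SimpleGraph V) [DecidableRel G.Adj] [G.LocallyFinite] (n : ℕ) where
  config : ℕ → V → ℕ
  site : ℕ → V
  sign : ℕ → ℤ
  isMove : ∀ i < n, sign i = 1 ∧ fireStep G (site i) (config i) (config (i + 1)) ∨
    sign i = -1 ∧ antifireStep G (site i) (config i) (config (i + 1))

namespace MoveSeq

variable {G : SimpleGraph V} [DecidableRel G.Adj] [G.LocallyFinite] {n : ℕ}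

def cons (r : MoveSeq G n) (m : V → ℕ) (v : V) (s : ℤ)
    (h : s = 1 ∧ fireStep G v m (r.config 0) ∨ s = -1 ∧ antifireStep G v m (r.config 0)) :
    MoveSeq G (n + 1) where
  config | 0 => m | i + 1 => r.config i
  site | 0 => v | i + 1 => r.site i
  sign | 0 => s | i + 1 => r.sign i
  isMove
    | 0, _ => h
    | i + 1, hi => r.isMove i (by omega)

theorem exists_of_reflTransGen [Nonempty V] {m₀ m : V → ℕ}
    (h : Relation.ReflTransGen (moveStep G) m₀ m) :
    ∃ n, ∃ r : MoveSeq G n, r.config 0 = m₀ ∧ r.config n = m := by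
  induction h using Relation.ReflTransGen.head_induction_on with
  | refl =>
    exact ⟨0, ⟨fun _ => m, fun _ => Classical.arbitrary V, fun _ => 1, by simp⟩, rfl, rfl⟩
  | head hstep _ ih =>
    obtain ⟨n, r, h0, hn⟩ := ih
    obtain ⟨v, hfire | hanti⟩ := hstep
    · exact ⟨n + 1, r.cons _ v 1 (.inl ⟨rfl, h0 ▸ hfire⟩), rfl, hn⟩
    · exact ⟨n + 1, r.cons _ v (-1) (.inr ⟨rfl, h0 ▸ hanti⟩), rfl, hn⟩

variable (r : MoveSeq G n)

theorem abs_sign_eq_one {i : ℕ} (hi : i < n) : |r.sign i| = 1 := by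
  rcases r.isMove i hi with ⟨h, -⟩ | ⟨h, -⟩ <;> simp [h]

theorem config_succ [DecidableEq V] {i : ℕ} (hi : i < n) (y : V) :
    (r.config (i + 1) y : ℤ) = r.config i y + (if G.Adj (r.site i) y then r.sign i else 0) -
      G.degree y * (if r.site i = y then r.sign i else 0) := by
  rcases r.isMove i hi with ⟨hs, hv, -, hv', hnbr, hrest⟩ | ⟨hs, hv, -, hv', hnbr, hrest⟩
  all_goals
    by_cases hy : r.site i = y
    · subst hy
      simp [hs, hv, hv']
    by_cases hadj : G.Adj (r.site i) y
    · have := hnbr y hadj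
      simp [hs, hy, hadj]
      omega
    · simp [hy, hadj, hrest y (Ne.symm hy) hadj]

def Idle (z : V) (a b : ℕ) : Prop :=
  ∀ i ∈ Ico a b, r.site i ≠ z

theorem Idle.mono {r : MoveSeq G n} {z : V} {a b a' b' : ℕ} (h : r.Idle z a b) (ha : a ≤ a')
    (hb : b' ≤ b) : r.Idle z a' b' :=
  fun i hi => h i (Ico_subset_Ico ha hb hi)

variable [DecidableEq V]

def netFirings (a b : ℕ) (z : V) : ℤ :=
  ∑ i ∈ Ico a b, if r.site i = z then r.sign i else 0

variable {r}

theorem Idle.netFirings_eq_zero {z : V} {a b : ℕ} (h : r.Idle z a b) : r.netFirings a b z = 0 :=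
  sum_eq_zero fun i hi => if_neg (h i hi)

theorem config_eq_add_netFirings {a b : ℕ} (hab : a ≤ b) (hb : b ≤ n) (y : V) :
    (r.config b y : ℤ) =
      r.config a y + ∑ z ∈ G.neighborFinset y, r.netFirings a b z -
        G.degree y * r.netFirings a b y := by
  induction b, hab using Nat.le_induction with
  | base => simp [netFirings]
  | succ b hab ih =>
    have hnet (z : V) : r.netFirings a (b + 1) z =
        r.netFirings a b z + if r.site b = z then r.sign b else 0 :=
      sum_Ico_succ_top hab _
    have hnbr : (∑ z ∈ G.neighborFinset y, if r.site b = z then r.sign b else 0) =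
        if G.Adj (r.site b) y then r.sign b else 0 := by
      simp [sum_ite_eq, G.adj_comm]
    rw [r.config_succ (by omega), ih (by omega), hnet]
    simp only [hnet, sum_add_distrib, hnbr]
    ring

theorem config_eq_of_idle {a b : ℕ} (hab : a ≤ b) (hb : b ≤ n) {y : V} (hy : r.Idle y a b)
    (hnbr : ∀ z, G.Adj y z → r.Idle z a b) : r.config b y = r.config a y := by
  have := r.config_eq_add_netFirings hab hb y
  rw [hy.netFirings_eq_zero, sum_eq_zero fun z hz =>
    (hnbr z ((G.mem_neighborFinset y z).mp hz)).netFirings_eq_zero] at this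
  omega

theorem exists_two_le_netFirings_of_fill {a b : ℕ} (hab : a ≤ b) (hb : b ≤ n) {x y : V}
    (hyx : G.Adj y x) (hy : r.Idle y a b) (hx : r.Idle x a b) (hempty : r.config a y = 0)
    (hfull : r.config b y = G.degree y) : ∃ z, G.Adj y z ∧ 2 ≤ r.netFirings a b z := by
  -- The idle neighbor `x` contributes nothing, so the other `deg y - 1` neighbors supply `deg y`.
  by_contra! hle
  have hsum : ∑ z ∈ G.neighborFinset y, r.netFirings a b z = G.degree y := by
    have := r.config_eq_add_netFirings hab hb y
    rw [hy.netFirings_eq_zero, hempty, hfull] at this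
    omega
  have hlt :
      ∑ z ∈ G.neighborFinset y, r.netFirings a b z < ∑ _z ∈ G.neighborFinset y, (1 : ℤ) :=
    sum_lt_sum (fun z hz => by have := hle z ((G.mem_neighborFinset y z).mp hz); omega)
      ⟨x, (G.mem_neighborFinset y x).mpr hyx, by rw [hx.netFirings_eq_zero]; norm_num⟩
  simp [hsum] at hlt

theorem exists_fire_fire_of_two_le_netFirings {a b : ℕ} (hb : b ≤ n) {z : V}
    (h : 2 ≤ r.netFirings a b z) :
    ∃ a' b', a ≤ a' ∧ a' < b' ∧ b' < b ∧ r.config (a' + 1) z = 0 ∧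
      r.config b' z = G.degree z ∧ r.Idle z (a' + 1) b' := by
  obtain ⟨a', b', ha, hab, hbb, ha', hb', hgap⟩ :=
    exists_consecutive_eq_one (d := fun i => if r.site i = z then r.sign i else 0)
      (fun i hi => by
        have := r.abs_sign_eq_one (i := i) (by simp at hi; omega)
        split_ifs <;> simp [this]) h
  have fire_of {i : ℕ} (hi : i < n) (h1 : (if r.site i = z then r.sign i else 0) = 1) :
      fireStep G z (r.config i) (r.config (i + 1)) := by
    obtain ⟨rfl, hs⟩ : r.site i = z ∧ r.sign i = 1 := by split_ifs at h1 <;> simp_all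
    rcases r.isMove i hi with ⟨-, hfire⟩ | ⟨hs', -⟩
    · exact hfire
    · omega
  refine ⟨a', b', ha, hab, hbb, (fire_of (by omega) ha').2.2.1, (fire_of (by omega) hb').1,
    fun i hi hz => ?_⟩
  have := hgap i (by simp at hi ⊢; omega)
  simp only [hz, if_true] at this
  have := r.abs_sign_eq_one (i := i) (by simp at hi; omega)
  simp_all

/-- Between two consecutive firings of a neighbor `z` of `y` inside `[a, b)`, `z` fills up while
it and `y` stay idle: the same situation on a shorter interval. -/
theorem config_ne_degree_of_idle {x y : V} (hyx : G.Adj y x) {a b : ℕ} (hab : a ≤ b)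
    (hb : b ≤ n) (hy : r.Idle y a b) (hx : r.Idle x a b) (hempty : r.config a y = 0) :
    r.config b y ≠ G.degree y := by
  induction hlen : b - a using Nat.strong_induction_on generalizing x y a b with
  | _ len ih =>
    intro hfull
    obtain ⟨z, hyz, hz⟩ := exists_two_le_netFirings_of_fill hab hb hyx hy hx hempty hfull
    obtain ⟨a', b', ha, hab', hbb, hempty', hfull', hz'⟩ :=
      exists_fire_fire_of_two_le_netFirings hb hz
    exact ih _ (by omega) hyz.symm (by omega) (by omega) hz' (hy.mono (by omega) hbb.le)
      hempty' rfl hfull'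

end MoveSeq

theorem frozen_region_general (G : SimpleGraph V) [DecidableRel G.Adj] [G.LocallyFinite]
    (R : Set V) (hR : ∀ v ∈ R, ∃ w ∈ R, G.Adj v w)
    (m₀ : V → ℕ)
    (hinit : ∀ w ∈ R ∪ ⋃ v ∈ R, (G.neighborSet v : Set V), m₀ w = 0) :
    ∀ m, Relation.ReflTransGen (moveStep G) m₀ m → ∀ v ∈ R, m v = 0 := by
  classical
  intro m hm v hv
  have : Nonempty V := ⟨v⟩
  obtain ⟨n, r, rfl, rfl⟩ := MoveSeq.exists_of_reflTransGen hm
  set Rbar := R ∪ ⋃ v ∈ R, (G.neighborSet v : Set V)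
  have mem_of_adj {u z : V} (hu : u ∈ R) (huz : G.Adj u z) : z ∈ Rbar :=
    .inr (Set.mem_biUnion hu huz)
  have exists_adj {w : V} (hw : w ∈ Rbar) : ∃ u ∈ R, G.Adj w u := by
    rcases hw with hw | hw
    · exact hR w hw
    · obtain ⟨u, hu, huw⟩ := Set.mem_iUnion₂.mp hw
      exact ⟨u, hu, (G.mem_neighborSet u w).mp huw |>.symm⟩
  have hzero {t : ℕ} (ht : t ≤ n) (hidle : ∀ z ∈ Rbar, r.Idle z 0 t) {u : V}
      (hu : u ∈ R) : r.config t u = 0 :=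
    (r.config_eq_of_idle t.zero_le ht (hidle u (.inl hu))
      fun z huz => hidle z (mem_of_adj hu huz)).trans (hinit u (.inl hu))
  have hidle (t : ℕ) (ht : t ≤ n) : ∀ z ∈ Rbar, r.Idle z 0 t := by
    induction t with
    | zero => simp [MoveSeq.Idle]
    | succ t ih =>
      intro z hz i hi
      rcases Nat.lt_succ_iff_lt_or_eq.mp (mem_Ico.mp hi).2 with hit | rfl
      · exact ih (by omega) z hz i (by simp [hit])
      rintro rfl
      obtain ⟨u, hu, hzu⟩ := exists_adj hz
      rcases r.isMove i (by omega) with ⟨-, hfire⟩ | ⟨-, hanti⟩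
      · exact r.config_ne_degree_of_idle hzu i.zero_le (by omega) (ih (by omega) _ hz)
          (ih (by omega) u (.inl hu)) (hinit _ hz) hfire.1
      · have := hanti.2.1 u hzu
        rw [hzero (by omega) (ih (by omega)) hu] at this
        omega
  exact hzero le_rfl (hidle n le_rfl) hv

/-- If `R` is a set of vertices each of which has a neighbor in `R`, and the
initial configuration vanishes on `R̄ = R ∪ (neighborhoods of R)`, then every configuration
reachable by allowed moves still vanishes on `R`: the sites of `R` are frozen forever. -/
theorem frozen_region (G : SimpleGraph V) [DecidableRel G.Adj] [G.LocallyFinite]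
    (R : Set V) (hR : ∀ v ∈ R, ∃ w ∈ R, G.Adj v w)
    (m₀ : V → ℕ) (hbound : ∀ w, m₀ w ≤ G.degree w)
    (hinit : ∀ w ∈ R ∪ ⋃ v ∈ R, (G.neighborSet v : Set V), m₀ w = 0) :
    ∀ m, Relation.ReflTransGen (moveStep G) m₀ m → ∀ v ∈ R, m v = 0 :=
  frozen_region_general G R hR m₀ hinit
end

section
/- For a reversible (symmetric) Markov chain on a finite configuration space that decomposes into connected components C, with uniform initial distribution, the Cesàro limit of the connected autocorrelation of the local observable m_v equals Σ_C (|C|/D)(m̄_v(C) − m̄_v)², where D is the total number of configurations, m̄_v(C) is the mean of m_v over C, and m̄_v is the global mean. In particular this limit is nonnegative and is bounded below by the contribution of any subfamily of components. -/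
/-!
Let `A` be `T` acting on `ℓ²(S)`. A doubly stochastic matrix contracts `ℓ²` (Jensen on each row,
then the column sums), so by von Neumann's mean ergodic theorem the Cesàro averages of `Aᵗ f`
converge to the orthogonal projection `P f` of `f` onto the fixed space of `A`. The Dirichlet
identity `∑ T a b (y a - y b)² = 2 (‖y‖² - ⟪y, T y⟫)` shows that fixed vectors are constant on the
components of the chain, and conversely every such vector is fixed; hence `P f` is the function of
component means. The Cesàro limit of `⟪f, Aᵗ f⟫ / D - m̄²` is then `‖P f‖² / D - m̄²`, which is the
variance of the component means.
-/

open Filter Topology Finset Matrix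
open scoped Classical RealInnerProductSpace

theorem ContinuousLinearMap.tendsto_cesaro_inner_iterate {E : Type*} [NormedAddCommGroup E]
    [InnerProductSpace ℝ E] [CompleteSpace E] (A : E →L[ℝ] E) (hA : ‖A‖ ≤ 1) (x : E) :
    Tendsto (fun τ : ℕ => (τ : ℝ)⁻¹ * ∑ t ∈ range τ, ⟪x, A^[t] x⟫) atTop
      (𝓝 ⟪x, (A.eqLocus (1 : E →L[ℝ] E)).starProjection x⟫) := by
  convert (tendsto_const_nhds (x := x)).inner (𝕜 := ℝ)
    (A.tendsto_birkhoffAverage_orthogonalProjection hA x) using 1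
  · funext τ
    simp [birkhoffAverage, birkhoffSum, inner_smul_right, inner_sum]
  · rfl

namespace Matrix

variable {n : Type*} [Fintype n]

lemma sum_mul_sum_pow_mul_eq_inner [DecidableEq n] (T : Matrix n n ℝ) (f : n → ℝ) (t : ℕ) :
    ∑ i, f i * ∑ j, (T ^ t) j i * f j =
      ⟪WithLp.toLp 2 f, (⇑(toEuclideanCLM (𝕜 := ℝ) T))^[t] (WithLp.toLp 2 f)⟫ := by
  rw [← FunLike.coe_pow_eq_iterate, ← map_pow, inner_toEuclideanCLM, dotProduct_mulVec]
  simp only [dotProduct, vecMul, sum_mul, mul_sum]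
  exact sum_congr rfl fun i _ => sum_congr rfl fun j _ => by ring

lemma mulVec_eq_self_of_forall_ne_zero {T : Matrix n n ℝ} (hrow : ∀ i, ∑ j, T i j = 1)
    {y : n → ℝ} (hy : ∀ i j, T i j ≠ 0 → y i = y j) : T *ᵥ y = y := by
  funext i
  calc (T *ᵥ y) i = ∑ j, T i j * y i :=
        sum_congr rfl fun j _ => by by_cases h : T i j = 0 <;> simp [h, hy i j]
    _ = y i := by rw [← sum_mul, hrow, one_mul]

variable [DecidableEq n] {T : Matrix n n ℝ}

lemma sq_mulVec_le_of_mem_rowStochastic (hT : T ∈ rowStochastic ℝ n) (x : n → ℝ) (i : n) :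
    (T *ᵥ x) i ^ 2 ≤ ∑ j, T i j * x j ^ 2 := by
  simpa [mulVec, dotProduct, smul_eq_mul] using
    (even_two.convexOn_pow (𝕜 := ℝ)).map_sum_le (t := univ) (w := T i) (p := x)
      (fun j _ => nonneg_of_mem_rowStochastic hT) (sum_row_of_mem_rowStochastic hT i)
      (fun j _ => Set.mem_univ _)

lemma sum_sq_mulVec_le_of_mem_doublyStochastic (hT : T ∈ doublyStochastic ℝ n) (x : n → ℝ) :
    ∑ i, (T *ᵥ x) i ^ 2 ≤ ∑ i, x i ^ 2 :=
  calc ∑ i, (T *ᵥ x) i ^ 2 ≤ ∑ i, ∑ j, T i j * x j ^ 2 :=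
        sum_le_sum fun i _ => sq_mulVec_le_of_mem_rowStochastic
          (mem_doublyStochastic_iff_mem_rowStochastic_and_mem_colStochastic.1 hT).1 x i
    _ = ∑ j, x j ^ 2 := by
        rw [sum_comm]
        simp [← sum_mul, sum_col_of_mem_doublyStochastic hT]

lemma norm_toEuclideanCLM_le_one_of_mem_doublyStochastic (hT : T ∈ doublyStochastic ℝ n) :
    ‖toEuclideanCLM (𝕜 := ℝ) T‖ ≤ 1 := by
  refine ContinuousLinearMap.opNorm_le_bound _ zero_le_one fun x => ?_
  rw [one_mul, ← sq_le_sq₀ (norm_nonneg _) (norm_nonneg _)]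
  simpa [EuclideanSpace.norm_sq_eq] using sum_sq_mulVec_le_of_mem_doublyStochastic hT x

lemma sum_sum_mul_sub_sq_of_mem_doublyStochastic (hT : T ∈ doublyStochastic ℝ n) (y : n → ℝ) :
    ∑ i, ∑ j, T i j * (y i - y j) ^ 2 = 2 * (∑ i, y i ^ 2 - y ⬝ᵥ T *ᵥ y) := by
  have hrow : ∑ i, ∑ j, T i j * y i ^ 2 = ∑ i, y i ^ 2 := by
    simp [← sum_mul, sum_row_of_mem_doublyStochastic hT]
  have hcol : ∑ i, ∑ j, T i j * y j ^ 2 = ∑ j, y j ^ 2 := by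
    rw [sum_comm]
    simp [← sum_mul, sum_col_of_mem_doublyStochastic hT]
  have hcross : ∑ i, ∑ j, T i j * y i * y j = y ⬝ᵥ T *ᵥ y := by
    simp [dotProduct, mulVec, mul_sum, mul_assoc, mul_left_comm]
  calc ∑ i, ∑ j, T i j * (y i - y j) ^ 2
      = ∑ i, ∑ j, T i j * y i ^ 2 + ∑ i, ∑ j, T i j * y j ^ 2
          - 2 * ∑ i, ∑ j, T i j * y i * y j := by
        simp only [mul_sum, ← sum_add_distrib, ← sum_sub_distrib]
        exact sum_congr rfl fun i _ => sum_congr rfl fun j _ => by ring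
    _ = _ := by rw [hrow, hcol, hcross]; ring

lemma eq_of_mulVec_eq_self_of_ne_zero (hT : T ∈ doublyStochastic ℝ n) {y : n → ℝ}
    (hy : T *ᵥ y = y) {i j : n} (hij : T i j ≠ 0) : y i = y j := by
  have hzero : ∑ i, ∑ j, T i j * (y i - y j) ^ 2 = 0 := by
    rw [sum_sum_mul_sub_sq_of_mem_doublyStochastic hT, hy]
    simp [dotProduct, sq]
  have hnonneg : ∀ i j, 0 ≤ T i j * (y i - y j) ^ 2 := fun i j =>
    mul_nonneg (nonneg_of_mem_doublyStochastic hT) (sq_nonneg _)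
  have hrow := (sum_eq_zero_iff_of_nonneg fun i _ => sum_nonneg fun j _ => hnonneg i j).1 hzero
    i (mem_univ i)
  have hterm := (sum_eq_zero_iff_of_nonneg fun j _ => hnonneg i j).1 hrow j (mem_univ j)
  simpa [hij, sub_eq_zero] using hterm

lemma eq_of_mulVec_eq_self_of_eqvGen (hT : T ∈ doublyStochastic ℝ n) {y : n → ℝ}
    (hy : T *ᵥ y = y) {i j : n} (hij : Relation.EqvGen (fun i j => T i j ≠ 0) i j) :
    y i = y j := by
  induction hij with
  | rel i j h => exact eq_of_mulVec_eq_self_of_ne_zero hT hy h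
  | refl => rfl
  | symm _ _ _ ih => exact ih.symm
  | trans _ _ _ _ _ ih₁ ih₂ => exact ih₁.trans ih₂

end Matrix

section FiberMean

variable {S ι : Type*} [Fintype S] [DecidableEq ι] (q : S → ι)

noncomputable def fiberMean (f : S → ℝ) (c : ι) : ℝ :=
  (∑ a with q a = c, f a) / #{a | q a = c}

lemma card_mul_fiberMean (f : S → ℝ) (c : ι) :
    #{a | q a = c} * fiberMean q f c = ∑ a with q a = c, f a := by
  rcases eq_or_ne #{a | q a = c} 0 with h | h
  · simp [card_eq_zero.1 h]
  · exact mul_div_cancel₀ _ (Nat.cast_ne_zero.2 h)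

variable [Fintype ι]

lemma sum_card_fiber_mul (g : ι → ℝ) : ∑ c, (#{a | q a = c} : ℝ) * g c = ∑ a, g (q a) := by
  simp [← sum_fiberwise' univ q g]

lemma sum_fiberMean_comp (f : S → ℝ) : ∑ a, fiberMean q f (q a) = ∑ a, f a := by
  simp only [← sum_card_fiber_mul, card_mul_fiberMean]
  exact sum_fiberwise univ q f

lemma sum_comp_mul_sub_fiberMean (f : S → ℝ) (g : ι → ℝ) :
    ∑ a, g (q a) * (f a - fiberMean q f (q a)) = 0 := by
  rw [← sum_fiberwise univ q]
  refine sum_eq_zero fun c _ => ?_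
  calc ∑ a with q a = c, g (q a) * (f a - fiberMean q f (q a))
      = g c * ((∑ a with q a = c, f a) - #{a | q a = c} * fiberMean q f c) := by
        rw [sum_congr rfl fun a ha => by rw [(mem_filter.1 ha).2], ← mul_sum, sum_sub_distrib]
        simp
    _ = 0 := by rw [card_mul_fiberMean, sub_self, mul_zero]

lemma sum_mul_fiberMean_comp (f : S → ℝ) :
    ∑ a, f a * fiberMean q f (q a) = ∑ a, fiberMean q f (q a) ^ 2 := by
  have h := sum_comp_mul_sub_fiberMean q f (fiberMean q f)
  simp only [mul_sub, sum_sub_distrib, sub_eq_zero] at h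
  simpa [mul_comm, sq] using h

lemma sum_card_div_mul_sq_fiberMean_sub (f : S → ℝ) :
    ∑ c, (#{a | q a = c} : ℝ) / Fintype.card S *
        (fiberMean q f c - 1 / Fintype.card S * ∑ a, f a) ^ 2 =
      1 / Fintype.card S * ∑ a, fiberMean q f (q a) ^ 2 -
        (1 / Fintype.card S * ∑ a, f a) ^ 2 := by
  set D : ℝ := (Fintype.card S : ℝ)
  set μ := 1 / D * ∑ a, f a
  calc _ = 1 / D * ∑ a, (fiberMean q f (q a) - μ) ^ 2 := by
        rw [mul_sum, ← sum_card_fiber_mul q fun c => 1 / D * (fiberMean q f c - μ) ^ 2]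
        exact sum_congr rfl fun c _ => by ring
    _ = 1 / D * (∑ a, fiberMean q f (q a) ^ 2 - 2 * μ * ∑ a, f a + D * μ ^ 2) := by
        simp only [sub_sq, sum_add_distrib, sum_sub_distrib, ← sum_mul, ← mul_sum, sum_const,
          card_univ, nsmul_eq_mul, sum_fiberMean_comp, D]
        ring
    _ = _ := by
        rcases isEmpty_or_nonempty S with hS | hS
        · simp [μ]
        · have : D ≠ 0 := by positivity
          simp only [μ]
          field_simp
          ring

end FiberMean

lemma starProjection_eqLocus_toEuclideanCLM {S : Type*} [Fintype S] [DecidableEq S]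
    {T : Matrix S S ℝ} (hT : T ∈ doublyStochastic ℝ S) (f : S → ℝ) :
    ((toEuclideanCLM (𝕜 := ℝ) T).eqLocus
        (1 : EuclideanSpace ℝ S →L[ℝ] EuclideanSpace ℝ S)).starProjection (WithLp.toLp 2 f) =
      WithLp.toLp 2 fun a =>
        fiberMean (Quotient.mk (Relation.EqvGen.setoid fun i j => T i j ≠ 0)) f ⟦a⟧ := by
  set q := Quotient.mk (Relation.EqvGen.setoid fun i j => T i j ≠ 0)
  refine Submodule.eq_starProjection_of_mem_of_inner_eq_zero ?_ fun w hw => ?_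
  · have hp : T *ᵥ (fun a => fiberMean q f (q a)) = fun a => fiberMean q f (q a) :=
      mulVec_eq_self_of_forall_ne_zero (sum_row_of_mem_doublyStochastic hT)
        fun i j h => congrArg _ (Quot.sound (Relation.EqvGen.rel i j h))
    exact LinearMap.mem_eqLocus.2 (congrArg (WithLp.toLp 2) hp)
  · have hw : T *ᵥ w.ofLp = w.ofLp := congrArg WithLp.ofLp (LinearMap.mem_eqLocus.1 hw)
    have hconst : ∀ a, w a = w (q a).out := fun a =>
      eq_of_mulVec_eq_self_of_eqvGen hT hw (Quotient.exact (q a).out_eq.symm)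
    simp only [PiLp.inner_apply, PiLp.sub_apply, RCLike.inner_apply, Real.ringHom_apply]
    convert sum_comp_mul_sub_fiberMean q f fun c => w c.out using 3 with a
    exact hconst a

theorem cesaro_autocorrelation_general (S : Type*) [Fintype S]
    (T : Matrix S S ℝ)
    (hsymm : ∀ a b, T a b = T b a)
    (hnonneg : ∀ a b, 0 ≤ T a b)
    (hstoch : ∀ a, ∑ b, T a b = 1)
    (f : S → ℝ) :
    ∀ (st : Setoid S), st = Relation.EqvGen.setoid (fun a b => T a b ≠ 0) →
    ∀ (cls : Quotient st → Finset S),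
      (∀ c, cls c = Finset.univ.filter (fun a => (⟦a⟧ : Quotient st) = c)) →
    ∀ (D : ℝ), D = (Fintype.card S : ℝ) →
    ∀ (mbar : S → ℝ) (meanC : Quotient st → ℝ),
      (∀ a, mbar a = (1 / D) * ∑ b, f b) →
      (∀ c, meanC c = (∑ a ∈ cls c, f a) / ((cls c).card : ℝ)) →
    ∀ (L : ℝ), L = ∑ c : Quotient st, (((cls c).card : ℝ) / D) *
        (meanC c - (1 / D) * ∑ b, f b) ^ 2 →
      (Filter.Tendsto (fun τ : ℕ => (1 / (τ : ℝ)) * ∑ t ∈ Finset.range τ,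
          ((1 / D) * ∑ m₀, f m₀ * ∑ m, (T ^ t) m m₀ * f m -
            ((1 / D) * ∑ m₀, f m₀) ^ 2)) Filter.atTop (nhds L)) ∧
      0 ≤ L ∧
      ∀ F : Finset (Quotient st),
        ∑ c ∈ F, (((cls c).card : ℝ) / D) * (meanC c - (1 / D) * ∑ b, f b) ^ 2 ≤ L := by
  rintro st rfl cls hcls D rfl - meanC - hmeanC L rfl
  obtain rfl : cls = _ := funext hcls
  obtain rfl : meanC = fiberMean (Quotient.mk _) f := funext hmeanC
  set q := Quotient.mk (Relation.EqvGen.setoid fun a b => T a b ≠ 0)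
  have hT : T ∈ doublyStochastic ℝ S := mem_doublyStochastic_iff_sum.2
    ⟨hnonneg, hstoch, fun j => (sum_congr rfl fun i _ => hsymm i j).trans (hstoch j)⟩
  have hterm : ∀ c, 0 ≤ (#{a | q a = c} : ℝ) / Fintype.card S *
      (fiberMean q f c - 1 / Fintype.card S * ∑ b, f b) ^ 2 := fun c => by positivity
  refine ⟨?_, sum_nonneg fun c _ => hterm c,
    fun F => sum_le_sum_of_subset_of_nonneg (subset_univ F) fun c _ _ => hterm c⟩
  have hinner : ⟪WithLp.toLp 2 f, WithLp.toLp 2 fun a => fiberMean q f (q a)⟫ =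
      ∑ a, fiberMean q f (q a) ^ 2 := by
    rw [← sum_mul_fiberMean_comp]
    simp [PiLp.inner_apply, mul_comm]
  have hlim := (toEuclideanCLM (𝕜 := ℝ) T).tendsto_cesaro_inner_iterate
    (norm_toEuclideanCLM_le_one_of_mem_doublyStochastic hT) (WithLp.toLp 2 f)
  rw [starProjection_eqLocus_toEuclideanCLM hT, hinner] at hlim
  rw [sum_card_div_mul_sq_fiberMean_sub]
  simp_rw [sum_mul_sum_pow_mul_eq_inner]
  refine ((hlim.const_mul (1 / Fintype.card S : ℝ)).sub_const _).congr' ?_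
  filter_upwards [eventually_ne_atTop 0] with τ hτ
  rw [sum_sub_distrib, ← mul_sum, sum_const, card_range, nsmul_eq_mul]
  field_simp

/-- For a reversible (symmetric, nonnegative, stochastic) Markov chain on a
finite configuration space, with uniform initial distribution, the Cesàro limit of the
connected autocorrelation of an observable `f` equals
`Σ_C (|C|/D) (mean_C f − mean f)²`, where the sum runs over the connected components `C` of
the chain (equivalence classes of the transition relation). In particular the limit is
nonnegative and is bounded below by the contribution of any subfamily of components. -/
theorem cesaro_autocorrelation (S : Type*) [Fintype S] [Nonempty S]
    (T : Matrix S S ℝ)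
    (hsymm : ∀ a b, T a b = T b a)
    (hnonneg : ∀ a b, 0 ≤ T a b)
    (hstoch : ∀ a, ∑ b, T a b = 1)
    (f : S → ℝ) :
    ∀ (st : Setoid S), st = Relation.EqvGen.setoid (fun a b => T a b ≠ 0) →
    ∀ (cls : Quotient st → Finset S),
      (∀ c, cls c = Finset.univ.filter (fun a => (⟦a⟧ : Quotient st) = c)) →
    ∀ (D : ℝ), D = (Fintype.card S : ℝ) →
    ∀ (mbar : S → ℝ) (meanC : Quotient st → ℝ),
      (∀ a, mbar a = (1 / D) * ∑ b, f b) →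
      (∀ c, meanC c = (∑ a ∈ cls c, f a) / ((cls c).card : ℝ)) →
    ∀ (L : ℝ), L = ∑ c : Quotient st, (((cls c).card : ℝ) / D) *
        (meanC c - (1 / D) * ∑ b, f b) ^ 2 →
      (Filter.Tendsto (fun τ : ℕ => (1 / (τ : ℝ)) * ∑ t ∈ Finset.range τ,
          ((1 / D) * ∑ m₀, f m₀ * ∑ m, (T ^ t) m m₀ * f m -
            ((1 / D) * ∑ m₀, f m₀) ^ 2)) Filter.atTop (nhds L)) ∧
      0 ≤ L ∧
      ∀ F : Finset (Quotient st),
        ∑ c ∈ F, (((cls c).card : ℝ) / D) * (meanC c - (1 / D) * ∑ b, f b) ^ 2 ≤ L :=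
  cesaro_autocorrelation_general S T hsymm hnonneg hstoch f
end

section
/- On an L×L square lattice with spins s ∈ {−S,...,S} and the discrete Laplacian gate (subtract 4 from a site, add 1 to each of its 4 neighbors, and the inverse, subject to |s| ≤ S), the number N_F of completely frozen configurations (configurations on which no gate can act anywhere) satisfies N_F ≥ (2S+1)^{(5/9)L²} whenever 3 divides L, for any S ≥ 2. -/
/-- The spin value in `{−S,…,S}` encoded by an element of `Fin (2S+1)`. -/
def spinVal (S : ℕ) (k : Fin (2 * S + 1)) : ℤ := (k : ℤ) - S

/-- The four neighbors of a site of the `L × L` (periodic) square lattice. -/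
def torusNbrs (L : ℕ) (v : ZMod L × ZMod L) : List (ZMod L × ZMod L) :=
  [v + (1, 0), v - (1, 0), v + (0, 1), v - (0, 1)]

/-- The gate at `v` (subtract 4 from `v`, add 1 to each of its four neighbors) is admissible. -/
def CanFire (L S : ℕ) (s : ZMod L × ZMod L → Fin (2 * S + 1)) (v : ZMod L × ZMod L) : Prop :=
  -(S : ℤ) ≤ spinVal S (s v) - 4 ∧ ∀ w ∈ torusNbrs L v, spinVal S (s w) + 1 ≤ (S : ℤ)

/-- The inverse gate at `v` is admissible. -/
def CanAntifire (L S : ℕ) (s : ZMod L × ZMod L → Fin (2 * S + 1)) (v : ZMod L × ZMod L) : Prop :=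
  spinVal S (s v) + 4 ≤ (S : ℤ) ∧ ∀ w ∈ torusNbrs L v, -(S : ℤ) ≤ spinVal S (s w) - 1

/-- A configuration is completely frozen: no gate (nor inverse gate) can act anywhere. -/
def Frozen (L S : ℕ) (s : ZMod L × ZMod L → Fin (2 * S + 1)) : Prop :=
  ∀ v, ¬ CanFire L S s v ∧ ¬ CanAntifire L S s v



def isPlus (r : ZMod 3 × ZMod 3) : Prop := r = (0, 0) ∨ r = (1, 0)
def isMinus (r : ZMod 3 × ZMod 3) : Prop := r = (2, 1) ∨ r = (2, 2)

instance : DecidablePred isPlus := fun r => by unfold isPlus; infer_instance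
instance : DecidablePred isMinus := fun r => by unfold isMinus; infer_instance

lemma minus_not_plus : ∀ r, isMinus r → ¬ isPlus r := by decide

lemma exists_plus_nbr : ∀ r : ZMod 3 × ZMod 3, ¬ isMinus r →
    isPlus (r + (1,0)) ∨ isPlus (r - (1,0)) ∨ isPlus (r + (0,1)) ∨ isPlus (r - (0,1)) := by
  decide

lemma exists_minus_nbr : ∀ r : ZMod 3 × ZMod 3, ¬ isPlus r →
    isMinus (r + (1,0)) ∨ isMinus (r - (1,0)) ∨ isMinus (r + (0,1)) ∨ isMinus (r - (0,1)) := by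
  decide

def res (L : ℕ) (h3 : 3 ∣ L) (v : ZMod L × ZMod L) : ZMod 3 × ZMod 3 :=
  (ZMod.castHom h3 (ZMod 3) v.1, ZMod.castHom h3 (ZMod 3) v.2)

lemma res_add (L : ℕ) (h3 : 3 ∣ L) (v w : ZMod L × ZMod L) :
    res L h3 (v + w) = res L h3 v + res L h3 w := by
  simp only [res, Prod.fst_add, Prod.snd_add, map_add, Prod.mk_add_mk]

lemma res_sub (L : ℕ) (h3 : 3 ∣ L) (v w : ZMod L × ZMod L) :
    res L h3 (v - w) = res L h3 v - res L h3 w := by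
  simp only [res, Prod.fst_sub, Prod.snd_sub, map_sub, Prod.mk_sub_mk]

lemma res_e1 (L : ℕ) (h3 : 3 ∣ L) : res L h3 ((1,0) : ZMod L × ZMod L) = (1,0) := by
  simp only [res, map_one, map_zero]

lemma res_e2 (L : ℕ) (h3 : 3 ∣ L) : res L h3 ((0,1) : ZMod L × ZMod L) = (0,1) := by
  simp only [res, map_one, map_zero]


def cfg (L S : ℕ) (h3 : 3 ∣ L)
    (f : {v : ZMod L × ZMod L // ¬ isPlus (res L h3 v) ∧ ¬ isMinus (res L h3 v)} → Fin (2*S+1))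
    (v : ZMod L × ZMod L) : Fin (2*S+1) :=
  if h1 : isPlus (res L h3 v) then ⟨2*S, by omega⟩
  else if h2 : isMinus (res L h3 v) then ⟨0, by omega⟩
  else f ⟨v, h1, h2⟩

lemma cfg_plus (L S : ℕ) (h3 : 3 ∣ L) (f) (v : ZMod L × ZMod L)
    (h : isPlus (res L h3 v)) : spinVal S (cfg L S h3 f v) = S := by
  simp only [cfg, dif_pos h, spinVal]
  push_cast
  ring

lemma cfg_minus (L S : ℕ) (h3 : 3 ∣ L) (f) (v : ZMod L × ZMod L)
    (h : isMinus (res L h3 v)) : spinVal S (cfg L S h3 f v) = -S := by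
  simp only [cfg, dif_neg (minus_not_plus _ h), dif_pos h, spinVal]
  push_cast
  ring

lemma cfg_frozen (L S : ℕ) (h3 : 3 ∣ L)
    (f : {v : ZMod L × ZMod L // ¬ isPlus (res L h3 v) ∧ ¬ isMinus (res L h3 v)} → Fin (2*S+1)) :
    Frozen L S (cfg L S h3 f) := by
  intro v
  have hm1 : v + (1,0) ∈ torusNbrs L v := by simp [torusNbrs]
  have hm2 : v - (1,0) ∈ torusNbrs L v := by simp [torusNbrs]
  have hm3 : v + (0,1) ∈ torusNbrs L v := by simp [torusNbrs]
  have hm4 : v - (0,1) ∈ torusNbrs L v := by simp [torusNbrs]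
  constructor
  · rintro ⟨hA, hB⟩
    by_cases hm : isMinus (res L h3 v)
    · rw [cfg_minus L S h3 f v hm] at hA; omega
    · rcases exists_plus_nbr _ hm with h | h | h | h
      · have := hB _ hm1
        rw [cfg_plus L S h3 f _ (by rw [res_add, res_e1]; exact h)] at this; omega
      · have := hB _ hm2
        rw [cfg_plus L S h3 f _ (by rw [res_sub, res_e1]; exact h)] at this; omega
      · have := hB _ hm3
        rw [cfg_plus L S h3 f _ (by rw [res_add, res_e2]; exact h)] at this; omega
      · have := hB _ hm4
        rw [cfg_plus L S h3 f _ (by rw [res_sub, res_e2]; exact h)] at this; omega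
  · rintro ⟨hA, hB⟩
    by_cases hp : isPlus (res L h3 v)
    · rw [cfg_plus L S h3 f v hp] at hA; omega
    · rcases exists_minus_nbr _ hp with h | h | h | h
      · have := hB _ hm1
        rw [cfg_minus L S h3 f _ (by rw [res_add, res_e1]; exact h)] at this; omega
      · have := hB _ hm2
        rw [cfg_minus L S h3 f _ (by rw [res_sub, res_e1]; exact h)] at this; omega
      · have := hB _ hm3
        rw [cfg_minus L S h3 f _ (by rw [res_add, res_e2]; exact h)] at this; omega
      · have := hB _ hm4
        rw [cfg_minus L S h3 f _ (by rw [res_sub, res_e2]; exact h)] at this; omega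

lemma res_encode (L : ℕ) (h3 : 3 ∣ L) (a b : ZMod 3) (i j : ℕ) :
    res L h3 (((a.val + 3*i : ℕ) : ZMod L), ((b.val + 3*j : ℕ) : ZMod L)) = (a, b) := by
  simp only [res, map_natCast, Prod.mk.injEq]
  have h3z : (3 : ZMod 3) = 0 := by decide
  constructor <;>
  · push_cast
    rw [h3z, zero_mul, add_zero, ZMod.natCast_val, ZMod.cast_id]

/-- On an `L × L` square lattice with spins in `{−S,…,S}`, `S ≥ 2` and
`3 ∣ L`, the number of completely frozen configurations of the discrete Laplacian gate is at
least `(2S+1)^{(5/9)L²}`. -/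
theorem frozen_count_lower_bound (L S : ℕ) (hL : 0 < L) (h3 : 3 ∣ L) (hS : 2 ≤ S) :
    (2 * S + 1) ^ (5 * L ^ 2 / 9) ≤
      Nat.card {s : ZMod L × ZMod L → Fin (2 * S + 1) // Frozen L S s} := by
  haveI : NeZero L := ⟨hL.ne'⟩
  obtain ⟨m, hm⟩ := id h3
  have hm0 : 0 < m := by omega
  -- injection from functions on free sites to frozen configurations
  have hinj1 : Function.Injective
      (fun f : {v : ZMod L × ZMod L // ¬ isPlus (res L h3 v) ∧ ¬ isMinus (res L h3 v)} → Fin (2*S+1) =>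
        (⟨cfg L S h3 f, cfg_frozen L S h3 f⟩ :
          {s : ZMod L × ZMod L → Fin (2 * S + 1) // Frozen L S s})) := by
    intro f g hfg
    funext ⟨v, h1, h2⟩
    have := congrFun (congrArg Subtype.val hfg) v
    simpa [cfg, dif_neg h1, dif_neg h2] using this
  have h1 : Nat.card ({v : ZMod L × ZMod L // ¬ isPlus (res L h3 v) ∧ ¬ isMinus (res L h3 v)} → Fin (2*S+1))
      ≤ Nat.card {s : ZMod L × ZMod L → Fin (2 * S + 1) // Frozen L S s} :=
    Nat.card_le_card_of_injective _ hinj1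
  -- injection counting the free sites
  have hinj2 : Function.Injective
      (fun x : {r : ZMod 3 × ZMod 3 // ¬ isPlus r ∧ ¬ isMinus r} × (Fin m × Fin m) =>
        (⟨(((x.1.1.1.val + 3 * x.2.1.val : ℕ) : ZMod L), ((x.1.1.2.val + 3 * x.2.2.val : ℕ) : ZMod L)),
          by rw [res_encode]; exact x.1.2⟩ :
          {v : ZMod L × ZMod L // ¬ isPlus (res L h3 v) ∧ ¬ isMinus (res L h3 v)})) := by
    rintro ⟨⟨⟨a, b⟩, ha⟩, i, j⟩ ⟨⟨⟨a', b'⟩, ha'⟩, i', j'⟩ h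
    simp only [Subtype.mk.injEq, Prod.mk.injEq] at h
    obtain ⟨h1', h2'⟩ := h
    have e1 := congrArg ZMod.val h1'
    have e2 := congrArg ZMod.val h2'
    rw [ZMod.val_natCast_of_lt (by have := a.val_lt; have := i.2; omega),
        ZMod.val_natCast_of_lt (by have := a'.val_lt; have := i'.2; omega)] at e1
    rw [ZMod.val_natCast_of_lt (by have := b.val_lt; have := j.2; omega),
        ZMod.val_natCast_of_lt (by have := b'.val_lt; have := j'.2; omega)] at e2
    have hav := a.val_lt; have hav' := a'.val_lt
    have hbv := b.val_lt; have hbv' := b'.val_lt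
    have haa : a = a' := ZMod.val_injective 3 (by omega)
    have hbb : b = b' := ZMod.val_injective 3 (by omega)
    have hii : i = i' := Fin.ext (by omega)
    have hjj : j = j' := Fin.ext (by omega)
    simp [haa, hbb, hii, hjj]
  have h2 : 5 * L ^ 2 / 9 ≤
      Nat.card {v : ZMod L × ZMod L // ¬ isPlus (res L h3 v) ∧ ¬ isMinus (res L h3 v)} := by
    have := Nat.card_le_card_of_injective _ hinj2
    rw [Nat.card_prod, Nat.card_prod, Nat.card_eq_fintype_card (α := Fin m),
      Nat.card_eq_fintype_card (α := {r : ZMod 3 × ZMod 3 // ¬ isPlus r ∧ ¬ isMinus r}),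
      Fintype.card_fin] at this
    have h5 : Fintype.card {r : ZMod 3 × ZMod 3 // ¬ isPlus r ∧ ¬ isMinus r} = 5 := by decide
    rw [h5] at this
    have hL2 : 5 * L ^ 2 / 9 = 5 * (m * m) := by
      subst hm
      have : 5 * (3 * m) ^ 2 = 5 * (m * m) * 9 := by ring
      rw [this, Nat.mul_div_cancel _ (by norm_num)]
    omega
  calc (2 * S + 1) ^ (5 * L ^ 2 / 9)
      ≤ (2 * S + 1) ^ Nat.card {v : ZMod L × ZMod L // ¬ isPlus (res L h3 v) ∧ ¬ isMinus (res L h3 v)} :=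
        Nat.pow_le_pow_right (by omega) h2
    _ = Nat.card ({v : ZMod L × ZMod L // ¬ isPlus (res L h3 v) ∧ ¬ isMinus (res L h3 v)} → Fin (2*S+1)) := by
        simp [Nat.card_eq_fintype_card, Fintype.card_fun]
    _ ≤ _ := h1
end
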